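/- Let λ be a real number with 0 < λ < 1. Set R_∞ := √(1+10λ+λ²)/(1+λ), g := √(λ(1+λ))/(1+10λ+λ²)^{3/4}, S_∞ := (R_∞ − 1)/(2gR_∞), and for each integer k ≥ 0 define R_k := R_∞·((1−λ^k)(1−λ^{k+2}))/(1−λ^{k+1})² and S_k := S_∞ − gR_∞²·λ^k·((1−λ)(1−λ²))/((1−λ^{k+1})(1−λ^{k+2})). Then R_0 = 0, and for every k ≥ 0, S_k = g·(S_k² + R_k + R_{k+1}). -/

import Mathlib

/-!
Write `s = √(1 + 10λ + λ²)`. Then `R_∞ = s / (1 + λ)`, `g² = λ(1 + λ) / s³` and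
`g S_∞ = 1/2 - (1 + λ) / (2s)`. Multiplying `S = g(S² + T)` by `g` and completing the square
turns it into `(g S - 1/2)² + g² T = 1/4`. For `S = S_k`, `T = R_k + R_{k+1}` both terms on the
left carry a factor `1/s²`, and once it is cleared (using `s² = 1 + 10λ + λ²`) the equation is
a rational identity in `λ` and `t = λ^k`.
-/

theorem eq_mul_sq_add_of_sq_sub_half_eq {K : Type*} [Field K] [CharZero K] {g S T : K}
    (hg : g ≠ 0) (h : (g * S - 1 / 2) ^ 2 = 1 / 4 - g ^ 2 * T) : S = g * (S ^ 2 + T) := by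
  apply mul_left_cancel₀ hg
  linear_combination (-1 : K) * h

theorem Real.rpow_three_div_four_sq {x : ℝ} (hx : 0 ≤ x) :
    (x ^ ((3 : ℝ) / 4)) ^ 2 = √x ^ 3 := by
  rw [← Real.rpow_natCast, ← Real.rpow_mul hx, Real.sqrt_eq_rpow, ← Real.rpow_natCast,
    ← Real.rpow_mul hx]
  norm_num

theorem slice_completed_square {K : Type*} [Field K] [CharZero K] (x t : K) (hx : 1 + x ≠ 0)
    (h1 : 1 - t * x ≠ 0) (h2 : 1 - t * x ^ 2 ≠ 0) :
    ((1 + x) / 2 + x * t * ((1 - x) * (1 - x ^ 2)) / ((1 + x) * ((1 - t * x) * (1 - t * x ^ 2))))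
        ^ 2 + x * ((1 - t) * (1 - t * x ^ 2) / (1 - t * x) ^ 2
          + (1 - t * x) * (1 - t * x ^ 3) / (1 - t * x ^ 2) ^ 2)
      = (1 + 10 * x + x ^ 2) / 4 := by
  -- `field_simp` writes the denominators as `1 - x * t`, so the hypotheses must match
  rw [mul_comm t] at *
  field_simp
  ring

theorem slice_equation_of_closed_form {K : Type*} [Field K] [CharZero K] {x s g Rinf Sinf : K}
    (hx : 1 + x ≠ 0) (hs : s ≠ 0) (hg : g ≠ 0) (hs2 : s ^ 2 = 1 + 10 * x + x ^ 2)
    (hRinf : Rinf = s / (1 + x)) (hg2 : g ^ 2 = x * (1 + x) / s ^ 3)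
    (hSinf : Sinf = (Rinf - 1) / (2 * g * Rinf)) (t : K)
    (h1 : 1 - t * x ≠ 0) (h2 : 1 - t * x ^ 2 ≠ 0) :
    let S := Sinf - g * Rinf ^ 2 * t * ((1 - x) * (1 - x ^ 2)) / ((1 - t * x) * (1 - t * x ^ 2))
    S = g * (S ^ 2 + (Rinf * ((1 - t) * (1 - t * x ^ 2)) / (1 - t * x) ^ 2
      + Rinf * ((1 - t * x) * (1 - t * x ^ 3)) / (1 - t * x ^ 2) ^ 2)) := by
  intro S
  apply eq_mul_sq_add_of_sq_sub_half_eq hg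
  have hgS : g * S - 1 / 2 = -((1 + x) / 2
      + x * t * ((1 - x) * (1 - x ^ 2)) / ((1 + x) * ((1 - t * x) * (1 - t * x ^ 2)))) / s := by
    have hgSinf : g * Sinf = 1 / 2 - (1 + x) / (2 * s) := by
      rw [hSinf, hRinf]; field_simp
    have : g * S = g * Sinf - g ^ 2 * Rinf ^ 2 * t * ((1 - x) * (1 - x ^ 2))
        / ((1 - t * x) * (1 - t * x ^ 2)) := by ring
    rw [this, hgSinf, hg2, hRinf]
    field_simp
    ring
  have hgR : g ^ 2 * (Rinf * ((1 - t) * (1 - t * x ^ 2)) / (1 - t * x) ^ 2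
      + Rinf * ((1 - t * x) * (1 - t * x ^ 3)) / (1 - t * x ^ 2) ^ 2)
      = x * ((1 - t) * (1 - t * x ^ 2) / (1 - t * x) ^ 2
        + (1 - t * x) * (1 - t * x ^ 3) / (1 - t * x ^ 2) ^ 2) / s ^ 2 := by
    rw [hg2, hRinf]
    field_simp
  rw [hgS, hgR, eq_sub_iff_add_eq, neg_div, neg_sq, div_pow, ← add_div,
    slice_completed_square x t hx h1 h2, ← hs2]
  field_simp

/-- The explicit closed-form solution parametrized by `λ ∈ (0,1)` satisfies `R_0 = 0`
and the second family of classical slice equations `S_k = g(S_k² + R_k + R_{k+1})`. -/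
theorem stmt17 (lam : ℝ) (hlam0 : 0 < lam) (hlam1 : lam < 1)
    (Rinf g Sinf : ℝ)
    (hRinf : Rinf = Real.sqrt (1 + 10 * lam + lam ^ 2) / (1 + lam))
    (hg : g = Real.sqrt (lam * (1 + lam)) / (1 + 10 * lam + lam ^ 2) ^ ((3 : ℝ) / 4))
    (hSinf : Sinf = (Rinf - 1) / (2 * g * Rinf))
    (R S : ℕ → ℝ)
    (hR : ∀ k, R k = Rinf * ((1 - lam ^ k) * (1 - lam ^ (k + 2))) / (1 - lam ^ (k + 1)) ^ 2)
    (hS : ∀ k, S k = Sinf - g * Rinf ^ 2 * lam ^ k * ((1 - lam) * (1 - lam ^ 2))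
        / ((1 - lam ^ (k + 1)) * (1 - lam ^ (k + 2)))) :
    R 0 = 0 ∧ ∀ k, S k = g * ((S k) ^ 2 + R k + R (k + 1)) := by
  have hD : 0 < 1 + 10 * lam + lam ^ 2 := by positivity
  have hs2 : √(1 + 10 * lam + lam ^ 2) ^ 2 = 1 + 10 * lam + lam ^ 2 := Real.sq_sqrt hD.le
  have hg0 : g ≠ 0 := by rw [hg]; positivity
  have hg2 : g ^ 2 = lam * (1 + lam) / √(1 + 10 * lam + lam ^ 2) ^ 3 := by
    rw [hg, div_pow, Real.sq_sqrt (by positivity), Real.rpow_three_div_four_sq hD.le]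
  have hpow : ∀ n, 1 - lam ^ (n + 1) ≠ 0 := fun n =>
    (sub_pos.2 (pow_lt_one₀ hlam0.le hlam1 n.succ_ne_zero)).ne'
  refine ⟨by simp [hR], fun k => ?_⟩
  have e1 : lam ^ (k + 1) = lam ^ k * lam := pow_succ lam k
  have e2 : lam ^ (k + 2) = lam ^ k * lam ^ 2 := pow_add lam k 2
  have e3 : lam ^ (k + 1 + 2) = lam ^ k * lam ^ 3 := by ring
  have key := slice_equation_of_closed_form (by positivity) (Real.sqrt_pos.2 hD).ne' hg0 hs2
    hRinf hg2 hSinf (lam ^ k) (e1 ▸ hpow k) (e2 ▸ hpow (k + 1))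
  rw [hS k, hR k, hR (k + 1), e1, e2, e3, add_assoc]
  exact key
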